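/- For n < N, the n-qubit anti-diagonal operator A_n = |0⟩⟨1|^{⊗n} + |1⟩⟨0|^{⊗n} can be written as A_n = Σ_{k=0}^{N−1} a_k M_k^{⊗n} with real coefficients a_k = (2/N)cos(πkn/N), where M_k = e^{-iπk/N}|0⟩⟨1| + e^{iπk/N}|1⟩⟨0|. -/

import Mathlib

open Complex Matrix BigOperators Real

noncomputable section

/-- Tensor product of single-qubit operators. -/
def tp {n : ℕ} (M : Fin n → Matrix (Fin 2) (Fin 2) ℂ) :
    Matrix (Fin n → Fin 2) (Fin n → Fin 2) ℂ :=
  Matrix.of fun f g => ∏ k, M k (f k) (g k)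

/-- `|0⟩⟨1|` -/
def ket01 : Matrix (Fin 2) (Fin 2) ℂ := !![0, 1; 0, 0]

/-- `|1⟩⟨0|` -/
def ket10 : Matrix (Fin 2) (Fin 2) ℂ := !![0, 0; 1, 0]

lemma aux_geom_gen (N : ℕ) (z : ℂ) (h1 : z ^ N = 1) (h2 : z ≠ 1) :
    ∑ k ∈ Finset.range N, z ^ k = 0 := by
  rw [geom_sum_eq h2, h1]; simp

lemma aux_exp_pow_N (r : ℝ) (j N : ℕ) (hN : 0 < N)
    (hr : r = 2 * π * j / N ∨ r = -(2 * π * j / N)) :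
    Complex.exp ((r : ℂ) * Complex.I) ^ N = 1 := by
  have hN' : (N:ℂ) ≠ 0 := Nat.cast_ne_zero.mpr hN.ne'
  rw [← Complex.exp_nat_mul]
  rcases hr with hr | hr <;> subst hr
  · have h : (N:ℂ) * ((((2 * π * j / N : ℝ)):ℂ) * Complex.I) = ((j:ℤ):ℂ) * (2 * π * Complex.I) := by
      push_cast; field_simp
    rw [h, Complex.exp_int_mul_two_pi_mul_I]
  · have h : (N:ℂ) * ((((-(2 * π * j / N) : ℝ)):ℂ) * Complex.I) = ((-(j:ℤ):ℤ):ℂ) * (2 * π * Complex.I) := by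
      push_cast; field_simp
    rw [h, Complex.exp_int_mul_two_pi_mul_I]

lemma aux_exp_ne_one (r : ℝ) (j N : ℕ) (hj0 : 0 < j) (hjN : j < N)
    (hr : r = 2 * π * j / N ∨ r = -(2 * π * j / N)) :
    Complex.exp ((r : ℂ) * Complex.I) ≠ 1 := by
  have hN : (0:ℝ) < N := by exact_mod_cast lt_trans hj0 hjN
  intro h
  rw [Complex.exp_eq_one_iff] at h
  obtain ⟨t, ht⟩ := h
  have him : r = t * (2 * π) := by
    have := congrArg Complex.im ht
    simpa using this
  have hpi := Real.pi_pos
  rcases hr with hr | hr <;> subst hr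
  · have h1 : (j : ℝ) = t * N := by field_simp at him; nlinarith [him]
    have h2 : (j : ℤ) = t * N := by exact_mod_cast h1
    have : N ∣ j := Int.ofNat_dvd.mp ⟨t, by linarith [h2]⟩
    have := Nat.le_of_dvd hj0 this
    omega
  · have h1 : (j : ℝ) = -(t * N) := by field_simp at him; nlinarith [him]
    have h2 : (j : ℤ) = -(t * N) := by exact_mod_cast h1
    have : N ∣ j := Int.ofNat_dvd.mp ⟨-t, by linarith [h2]⟩
    have := Nat.le_of_dvd hj0 this
    omega

lemma aux_geom_fin (N j : ℕ) (hj0 : 0 < j) (hjN : j < N) (r : ℝ)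
    (hr : r = 2 * π * j / N ∨ r = -(2 * π * j / N)) :
    ∑ k : Fin N, Complex.exp ((r : ℂ) * Complex.I) ^ (k:ℕ) = 0 := by
  rw [Fin.sum_univ_eq_sum_range (fun k => Complex.exp ((r : ℂ) * Complex.I) ^ k)]
  exact aux_geom_gen N _ (aux_exp_pow_N r j N (lt_trans hj0 hjN) hr) (aux_exp_ne_one r j N hj0 hjN hr)

lemma aux_geom_fin_zero (N : ℕ) (r : ℝ) (hr : r = 0) :
    ∑ k : Fin N, Complex.exp ((r : ℂ) * Complex.I) ^ (k:ℕ) = (N : ℂ) := by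
  subst hr; simp

lemma aux_summand (N n m k : ℕ) (hN : 0 < N) (hm : m ≤ n) :
    (((2 / N : ℝ) * Real.cos (π * k * n / N) : ℝ) : ℂ) *
      (Complex.exp (((π * k / N : ℝ) : ℂ) * Complex.I) ^ m *
       Complex.exp (((-(π * k / N) : ℝ) : ℂ) * Complex.I) ^ (n - m))
    = (1 / N : ℂ) *
       (Complex.exp (((2 * π * m / N : ℝ) : ℂ) * Complex.I) ^ k +
        Complex.exp (((-(2 * π * (n - m : ℕ) / N) : ℝ) : ℂ) * Complex.I) ^ k) := by
  have hN' : (N:ℂ) ≠ 0 := Nat.cast_ne_zero.mpr hN.ne'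
  rw [← Complex.exp_nat_mul, ← Complex.exp_nat_mul, ← Complex.exp_nat_mul,
      ← Complex.exp_nat_mul, Complex.ofReal_mul, Complex.ofReal_cos, Complex.cos,
      ← Complex.exp_add, show ((2/(N:ℝ) : ℝ):ℂ) = 2/N by push_cast; ring]
  have h1 : Complex.exp ((m:ℂ) * (((π * k / N : ℝ):ℂ) * Complex.I) + ((n-m : ℕ):ℂ) * (((-(π * k / N) : ℝ):ℂ) * Complex.I))
        * Complex.exp (((π * (k * n) / N : ℝ):ℂ) * Complex.I)
      = Complex.exp ((k:ℂ) * (((2 * π * m / N : ℝ):ℂ) * Complex.I)) := by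
    rw [← Complex.exp_add]; congr 1; push_cast [hm]; field_simp; ring
  have h2 : Complex.exp ((m:ℂ) * (((π * k / N : ℝ):ℂ) * Complex.I) + ((n-m : ℕ):ℂ) * (((-(π * k / N) : ℝ):ℂ) * Complex.I))
        * Complex.exp (-(((π * (k * n) / N : ℝ):ℂ) * Complex.I))
      = Complex.exp ((k:ℂ) * (((-(2 * π * (n - m : ℕ) / N) : ℝ):ℂ) * Complex.I)) := by
    rw [← Complex.exp_add]; congr 1; push_cast [hm]; field_simp; ring
  push_cast at h1 h2 ⊢
  ring_nf at h1 h2 ⊢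
  linear_combination (1/(N:ℂ)) * h1 + (1/(N:ℂ)) * h2

lemma aux_key (N n m : ℕ) (hn : 0 < n) (hnN : n < N) (hm : m ≤ n) :
    ∑ k : Fin N, (((2 / N : ℝ) * Real.cos (π * k * n / N) : ℝ) : ℂ) *
      (Complex.exp (((π * k / N : ℝ) : ℂ) * Complex.I) ^ m *
       Complex.exp (((-(π * k / N) : ℝ) : ℂ) * Complex.I) ^ (n - m))
    = (0:ℂ) ^ m + (0:ℂ) ^ (n - m) := by
  have hN : 0 < N := lt_trans hn hnN
  have hN' : (N:ℂ) ≠ 0 := Nat.cast_ne_zero.mpr hN.ne'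
  calc ∑ k : Fin N, (((2 / N : ℝ) * Real.cos (π * k * n / N) : ℝ) : ℂ) *
      (Complex.exp (((π * k / N : ℝ) : ℂ) * Complex.I) ^ m *
       Complex.exp (((-(π * k / N) : ℝ) : ℂ) * Complex.I) ^ (n - m))
      = (1/N : ℂ) * ((∑ k : Fin N, Complex.exp (((2 * π * m / N : ℝ) : ℂ) * Complex.I) ^ (k:ℕ))
        + ∑ k : Fin N, Complex.exp (((-(2 * π * (n - m : ℕ) / N) : ℝ) : ℂ) * Complex.I) ^ (k:ℕ)) := by
        rw [mul_add, Finset.mul_sum, Finset.mul_sum, ← Finset.sum_add_distrib]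
        exact Finset.sum_congr rfl fun k _ => by
          rw [aux_summand N n m k hN hm]; ring
    _ = (0:ℂ) ^ m + (0:ℂ) ^ (n - m) := by
        rcases Nat.eq_zero_or_pos m with hm0 | hm0
        · subst hm0
          rw [aux_geom_fin_zero N _ (by simp), aux_geom_fin N n hn hnN _ (Or.inr (by norm_num))]
          simp [zero_pow hn.ne', hN']
        · rcases eq_or_lt_of_le hm with hmn | hmn
          · subst hmn
            rw [aux_geom_fin N m hm0 hnN _ (Or.inl rfl), aux_geom_fin_zero N _ (by simp)]
            simp [zero_pow hm0.ne', hN']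
          · rw [aux_geom_fin N m hm0 (lt_trans hmn hnN) _ (Or.inl rfl),
                aux_geom_fin N (n - m) (by omega) (by omega) _ (Or.inr rfl)]
            simp [zero_pow hm0.ne', zero_pow (by omega : n - m ≠ 0)]

/-- for `n < N`, the `n`-qubit anti-diagonal operator
`A_n = |0⟩⟨1|^{⊗n} + |1⟩⟨0|^{⊗n}` equals `∑_{k<N} a_k M_k^{⊗n}` with the real
coefficients `a_k = (2/N) cos(πkn/N)`. -/
theorem antidiagonal_decomposition_sub (N n : ℕ) (hn : 0 < n) (hnN : n < N)
    (M : Fin N → Matrix (Fin 2) (Fin 2) ℂ)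
    (hM : ∀ k : Fin N,
      M k = Complex.exp (-(↑π * (k : ℕ) / N) * Complex.I) • ket01
          + Complex.exp ((↑π * (k : ℕ) / N) * Complex.I) • ket10) :
    tp (fun _ : Fin n => ket01) + tp (fun _ : Fin n => ket10)
      = ∑ k : Fin N,
          (((2 / N : ℝ) * Real.cos (π * (k : ℕ) * n / N) : ℝ) : ℂ)
            • tp (fun _ : Fin n => M k) := by
  have hN : 0 < N := lt_trans hn hnN
  have e01 : ∀ x y : Fin 2, ket01 x y = if x = 0 ∧ y = 1 then 1 else 0 := by
    intro x y; fin_cases x <;> fin_cases y <;> simp [ket01]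
  have e10 : ∀ x y : Fin 2, ket10 x y = if x = 1 ∧ y = 0 then 1 else 0 := by
    intro x y; fin_cases x <;> fin_cases y <;> simp [ket10]
  have hcl : ∀ x y : Fin 2, x ≠ y → (x = 0 ∧ y = 1) ∨ (x = 1 ∧ y = 0) := by decide
  ext f g
  simp only [Matrix.add_apply, Matrix.sum_apply, Matrix.smul_apply, tp, Matrix.of_apply,
    smul_eq_mul]
  by_cases hfg : ∀ i, f i ≠ g i
  · set m := (Finset.univ.filter (fun i => f i = 1)).card with hmdef
    have hmn : m ≤ n := by
      have := Finset.card_filter_le (Finset.univ : Finset (Fin n)) (fun i => f i = 1)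
      simpa using this
    have hcard : (Finset.univ.filter (fun i => ¬ f i = 1)).card = n - m := by
      have := Finset.card_filter_add_card_filter_not
        (s := (Finset.univ : Finset (Fin n))) (p := fun i => f i = 1)
      simp only [Finset.card_univ, Fintype.card_fin] at this
      omega
    have h1 : ∏ i, ket01 (f i) (g i) = (0:ℂ)^m := by
      have hterm : ∀ i : Fin n, ket01 (f i) (g i) = if f i = 1 then 0 else 1 := fun i => by
        rcases hcl _ _ (hfg i) with ⟨ha, hb⟩ | ⟨ha, hb⟩ <;> simp [e01, ha, hb]
      rw [Finset.prod_congr rfl (fun i _ => hterm i), Finset.prod_ite,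
        Finset.prod_const, Finset.prod_const, one_pow, mul_one]
    have h2 : ∏ i, ket10 (f i) (g i) = (0:ℂ)^(n - m) := by
      have hterm : ∀ i : Fin n, ket10 (f i) (g i) = if f i = 1 then 1 else 0 := fun i => by
        rcases hcl _ _ (hfg i) with ⟨ha, hb⟩ | ⟨ha, hb⟩ <;> simp [e10, ha, hb]
      rw [Finset.prod_congr rfl (fun i _ => hterm i), Finset.prod_ite,
        Finset.prod_const, Finset.prod_const, one_pow, one_mul, hcard]
    have h3 : ∀ k : Fin N, ∏ i, (M k) (f i) (g i)
        = Complex.exp (((π * (k:ℕ) / N : ℝ) : ℂ) * Complex.I) ^ m *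
          Complex.exp (((-(π * (k:ℕ) / N) : ℝ) : ℂ) * Complex.I) ^ (n - m) := by
      intro k
      have hterm : ∀ i : Fin n, (M k) (f i) (g i)
          = if f i = 1 then Complex.exp (((π * (k:ℕ) / N : ℝ) : ℂ) * Complex.I)
            else Complex.exp (((-(π * (k:ℕ) / N) : ℝ) : ℂ) * Complex.I) := fun i => by
        rw [hM k]
        rcases hcl _ _ (hfg i) with ⟨ha, hb⟩ | ⟨ha, hb⟩ <;>
          simp [Matrix.add_apply, Matrix.smul_apply, e01, e10, ha, hb, smul_eq_mul]
      rw [Finset.prod_congr rfl (fun i _ => hterm i), Finset.prod_ite,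
        Finset.prod_const, Finset.prod_const, hcard]
    rw [h1, h2]
    rw [Finset.sum_congr rfl (fun k _ => by rw [h3 k])]
    exact (aux_key N n m hn hnN hmn).symm
  · push_neg at hfg
    obtain ⟨i, hi⟩ := hfg
    have hz01 : ket01 (f i) (g i) = 0 := by
      rw [e01]; simp [hi]; intro h h2; rw [h] at h2; exact absurd h2 (by decide)
    have hz10 : ket10 (f i) (g i) = 0 := by
      rw [e10]; simp [hi]; intro h h2; rw [h] at h2; exact absurd h2 (by decide)
    rw [Finset.prod_eq_zero (Finset.mem_univ i) hz01,
        Finset.prod_eq_zero (Finset.mem_univ i) hz10]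
    rw [Finset.sum_eq_zero fun k _ => ?_]
    · ring
    · rw [Finset.prod_eq_zero (Finset.mem_univ i) ?_, mul_zero]
      rw [hM k]
      simp [Matrix.add_apply, Matrix.smul_apply, hz01, hz10, smul_eq_mul]
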